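/- arXiv:2307.01880 — 2 statements merged into one kernel-verified Lean document; each statement's English description precedes it below -/
import Mathlib

section
/- Let G be a locally compact, second countable, Hausdorff topological group and let Λ ⊆ G be a closed subset with finite local complexity. Equip the groupoid 𝒢(Λ) = {(x, P) ∈ G × 𝒞(G) : P ∈ Ω₀(Λ), x⁻¹ ∈ P, xP ∈ Ω₀(Λ)} with the subspace topology from G × 𝒞(G). Then the function ψ : 𝒢(Λ) × 𝒢(Λ) → ℝ defined by ψ((x, P), (y, Q)) = 1 if x = y and 0 otherwise is continuous. -/
open Set Filter Topology Pointwise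

/-- The space `𝒞(G)` of closed subsets of a topological space `G`. -/
structure CFClosed (G : Type*) [TopologicalSpace G] where
  carrier : Set G
  isClosed' : IsClosed carrier

namespace CFClosed

variable {G : Type*} [TopologicalSpace G]

instance : SetLike (CFClosed G) G where
  coe := CFClosed.carrier
  coe_injective := fun P Q h => by cases P; cases Q; congr

/-- The Chabauty–Fell topology on `𝒞(G)`, generated by the subbasis consisting of
`O_K = {C | C ∩ K = ∅}` for `K` compact and `O_U = {C | C ∩ U ≠ ∅}` for `U` open. -/
instance chabautyFell : TopologicalSpace (CFClosed G) :=
  TopologicalSpace.generateFrom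
    ({s | ∃ K : Set G, IsCompact K ∧ s = {C : CFClosed G | (C : Set G) ∩ K = ∅}} ∪
     {s | ∃ U : Set G, IsOpen U ∧ s = {C : CFClosed G | ((C : Set G) ∩ U).Nonempty}})

end CFClosed
section Hulls

variable {G : Type*} [TopologicalSpace G] [Group G]

/-- The hull `Ω(Λ)` of a closed subset `Λ ⊆ G`: the closure in the Chabauty–Fell topology
of the set of left translates of `Λ`. -/
def hull (Λ : CFClosed G) : Set (CFClosed G) :=
  closure {P : CFClosed G | ∃ g : G, (P : Set G) = g • (Λ : Set G)}

/-- The discrete hull `Ω₀(Λ)`: elements of the hull containing the identity. -/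
def discreteHull (Λ : CFClosed G) : Set (CFClosed G) :=
  {P ∈ hull Λ | (1 : G) ∈ P}

/-- Finite local complexity: for every compact `K ⊆ G` there is a finite collection `𝓕` of
finite subsets of `G` such that every `P ∈ Ω₀(Λ)` satisfies `K ∩ P = h • F` for some
`h ∈ G`, `F ∈ 𝓕`. -/
def FLC (Λ : CFClosed G) : Prop :=
  ∀ K : Set G, IsCompact K → ∃ 𝓕 : Set (Set G), 𝓕.Finite ∧ (∀ F ∈ 𝓕, F.Finite) ∧
    ∀ P ∈ discreteHull Λ, ∃ h : G, ∃ F ∈ 𝓕, K ∩ (P : Set G) = h • F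

end Hulls

open Pointwise

/-- The groupoid `𝒢(Λ) = {(x, P) : P ∈ Ω₀(Λ), x⁻¹ ∈ P, xP ∈ Ω₀(Λ)}` of a point set,
as a subset of `G × 𝒞(G)`. -/
def pointSetGroupoid {G : Type*} [TopologicalSpace G] [Group G] [IsTopologicalGroup G]
    (Λ : CFClosed G) : Set (G × CFClosed G) :=
  {p : G × CFClosed G | p.2 ∈ discreteHull Λ ∧ p.1⁻¹ ∈ p.2 ∧
    (⟨p.1 • (p.2 : Set G), p.2.isClosed'.smul p.1⟩ : CFClosed G) ∈ discreteHull Λ}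

/-!
Every arrow `(x, P)` of `𝒢(Λ)` has `x⁻¹ ∈ P ∈ Ω₀(Λ)`. By finite local complexity, for compact `K`
each patch `K ∩ P` with `P ∈ Ω₀(Λ)` is a translate `h • F` of one of finitely many finite sets, and
`1 ∈ P` pins `h` down to `f⁻¹` with `f ∈ F`; so all these patches lie in one finite set. Hence the
set of first coordinates of `𝒢(Λ)` meets every compact set in a finite set, so it is discrete in
the locally compact T1 group `G`. The projection `(x, P) ↦ x` is therefore a continuous map into a
discrete space, and `ψ` factors through it.
-/

section FiniteLocalComplexity

variable {G : Type*} [TopologicalSpace G] [Group G] {Λ : CFClosed G}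

theorem FLC.finite_inter_iUnion_discreteHull (hΛ : FLC Λ) {K : Set G} (hK : IsCompact K) :
    (K ∩ ⋃ P ∈ discreteHull Λ, (P : Set G)).Finite := by
  obtain ⟨𝓕, h𝓕, h𝓕fin, hpatch⟩ := hΛ (insert 1 K) (hK.insert 1)
  refine (h𝓕.biUnion fun F hF => (h𝓕fin F hF).biUnion fun f _ =>
    (h𝓕fin F hF).smul_set (a := f⁻¹)).subset ?_
  rintro x ⟨hxK, hx⟩
  obtain ⟨P, hP, hxP⟩ := mem_iUnion₂.1 hx
  obtain ⟨h, F, hF, hKP⟩ := hpatch P hP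
  have hone : (1 : G) ∈ h • F := hKP ▸ ⟨mem_insert _ _, hP.2⟩
  have hxF : x ∈ h • F := hKP ▸ ⟨mem_insert_of_mem _ hxK, hxP⟩
  obtain ⟨f, hf, hhf⟩ := mem_smul_set.1 hone
  rw [eq_inv_of_mul_eq_one_left hhf] at hxF
  exact mem_biUnion hF (mem_biUnion hf hxF)

end FiniteLocalComplexity

section Arrows

variable {G : Type*} [TopologicalSpace G] [Group G] [IsTopologicalGroup G] {Λ : CFClosed G}

theorem FLC.finite_inter_fst_image_pointSetGroupoid (hΛ : FLC Λ) {K : Set G} (hK : IsCompact K) :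
    (K ∩ Prod.fst '' pointSetGroupoid Λ).Finite := by
  refine (hΛ.finite_inter_iUnion_discreteHull hK.inv).inv.subset ?_
  rintro _ ⟨hxK, ⟨x, P⟩, ⟨hP, hxP, -⟩, rfl⟩
  exact ⟨inv_mem_inv.2 hxK, mem_biUnion hP hxP⟩

theorem FLC.discreteTopology_fst_image_pointSetGroupoid [T1Space G] [WeaklyLocallyCompactSpace G]
    (hΛ : FLC Λ) : DiscreteTopology (Prod.fst '' pointSetGroupoid Λ) :=
  continuous_subtype_val.discrete_of_tendsto_cofinite_cocompact <|
    tendsto_cofinite_cocompact_iff.2 fun _ hK =>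
      ((hΛ.finite_inter_fst_image_pointSetGroupoid hK).preimage
        Subtype.val_injective.injOn).subset fun x hx => ⟨hx, x.2⟩

end Arrows

theorem continuous_psi_general (G : Type*) [TopologicalSpace G] [Group G] [IsTopologicalGroup G]
    [LocallyCompactSpace G] [T2Space G] [DecidableEq G]
    (Λ : CFClosed G) (hFLC : FLC Λ) :
    Continuous (fun p : pointSetGroupoid Λ × pointSetGroupoid Λ =>
      if ((p.1 : G × CFClosed G)).1 = ((p.2 : G × CFClosed G)).1 then (1 : ℝ) else 0) := by
  set A := Prod.fst '' pointSetGroupoid Λ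
  have : DiscreteTopology A := hFLC.discreteTopology_fst_image_pointSetGroupoid
  let proj : pointSetGroupoid Λ → A := fun q => ⟨q.1.1, mem_image_of_mem _ q.2⟩
  have hproj : Continuous proj := (continuous_fst.comp continuous_subtype_val).subtype_mk _
  exact continuous_of_discreteTopology.comp
    (g := fun z : A × A => if z.1.1 = z.2.1 then (1 : ℝ) else 0) (hproj.prodMap hproj)

/-- For an FLC point set `Λ`, the function `ψ((x, P), (y, Q)) = 1` if `x = y` and `0`
otherwise is continuous on `𝒢(Λ) × 𝒢(Λ)`. -/
theorem continuous_psi (G : Type*) [TopologicalSpace G] [Group G] [IsTopologicalGroup G]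
    [LocallyCompactSpace G] [SecondCountableTopology G] [T2Space G] [DecidableEq G]
    (Λ : CFClosed G) (hFLC : FLC Λ) :
    Continuous (fun p : pointSetGroupoid Λ × pointSetGroupoid Λ =>
      if ((p.1 : G × CFClosed G)).1 = ((p.2 : G × CFClosed G)).1 then (1 : ℝ) else 0) :=
  continuous_psi_general G Λ hFLC
end

section
/- Let G be a locally compact, second countable, Hausdorff topological group, let Λ ⊆ G be a closed subset, and let C ⊆ G be compact. Then the set {(x, P) ∈ G × 𝒞(G) : x ∈ C, P ∈ Ω₀(Λ), x⁻¹ ∈ P, xP ∈ Ω₀(Λ)} is a compact subset of G × 𝒞(G). -/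
/-! `𝒞(G)` is compact for any `G`: an ultrafilter converges to the set of points each of whose
neighbourhoods is met by almost every member. When `G` is a locally compact group, the action
`(x, P) ↦ xP` is continuous and the incidence relation `x ∈ P` is closed, so the set in question
is a closed subset of the compact set `C × 𝒞(G)`. -/

open Set Filter Topology Pointwise

namespace CFClosed

variable {G : Type*} [TopologicalSpace G]

theorem isOpen_setOf_inter_eq_empty {K : Set G} (hK : IsCompact K) :
    IsOpen {P : CFClosed G | (P : Set G) ∩ K = ∅} :=
  .basic _ (.inl ⟨K, hK, rfl⟩)

theorem isOpen_setOf_inter_nonempty {U : Set G} (hU : IsOpen U) :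
    IsOpen {P : CFClosed G | ((P : Set G) ∩ U).Nonempty} :=
  .basic _ (.inr ⟨U, hU, rfl⟩)

theorem isClosed_setOf_mem (x : G) : IsClosed {P : CFClosed G | x ∈ P} := by
  have : {P : CFClosed G | x ∈ P}ᶜ = {P : CFClosed G | (P : Set G) ∩ {x} = ∅} := by
    ext P
    simp [inter_singleton_eq_empty]
  exact isOpen_compl_iff.1 (this ▸ isOpen_setOf_inter_eq_empty isCompact_singleton)

def ultrafilterLimit (f : Ultrafilter (CFClosed G)) : CFClosed G where
  carrier := {x | ∀ U : Set G, IsOpen U → x ∈ U → {P : CFClosed G | ((P : Set G) ∩ U).Nonempty} ∈ f}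
  isClosed' := by
    refine isOpen_compl_iff.1 (isOpen_iff_forall_mem_open.2 fun x hx => ?_)
    simp only [mem_compl_iff, mem_ofPred_eq, not_forall] at hx
    obtain ⟨U, hU, hxU, hUf⟩ := hx
    exact ⟨U, fun y hyU hy => hUf (hy U hU hyU), hU, hxU⟩

theorem mem_ultrafilterLimit {f : Ultrafilter (CFClosed G)} {x : G} :
    x ∈ ultrafilterLimit f ↔
      ∀ U : Set G, IsOpen U → x ∈ U → {P : CFClosed G | ((P : Set G) ∩ U).Nonempty} ∈ f :=
  Iff.rfl

theorem le_nhds_ultrafilterLimit (f : Ultrafilter (CFClosed G)) :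
    ↑f ≤ 𝓝 (ultrafilterLimit f) := by
  refine TopologicalSpace.tendsto_nhds_generateFrom_iff.2 ?_
  rintro s (⟨K, hK, rfl⟩ | ⟨U, hU, rfl⟩) hs
  · -- `K` is covered by finitely many open sets that `f`-almost every `P` misses.
    refine hK.induction_on (p := fun S => {P : CFClosed G | (P : Set G) ∩ S = ∅} ∈ f)
      (by simp only [inter_empty, ofPred_true]; exact univ_mem)
      (fun S T hST hT => mem_of_superset hT fun P hP => ?_)
      (fun S T hS hT => mem_of_superset (inter_mem hS hT) fun P hP => ?_) fun x hxK => ?_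
    · exact subset_empty_iff.1 (hP ▸ inter_subset_inter_right _ hST)
    · simp only [mem_inter_iff, mem_ofPred_eq] at hP
      simp [inter_union_distrib_left, hP.1, hP.2]
    · have hx : x ∉ ultrafilterLimit f := fun hx =>
        (eq_empty_iff_forall_notMem.1 hs x) ⟨hx, hxK⟩
      simp only [mem_ultrafilterLimit, not_forall] at hx
      obtain ⟨U, hU, hxU, hUf⟩ := hx
      refine ⟨U, mem_nhdsWithin_of_mem_nhds (hU.mem_nhds hxU), ?_⟩
      simpa [compl_ofPred, not_nonempty_iff_eq_empty] using Ultrafilter.compl_mem_iff_notMem.2 hUf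
  · obtain ⟨x, hx, hxU⟩ := hs
    exact hx U hU hxU

instance : CompactSpace (CFClosed G) :=
  ⟨isCompact_iff_ultrafilter_le_nhds.2 fun f _ => ⟨_, mem_univ _, le_nhds_ultrafilterLimit f⟩⟩

theorem isClosed_setOf_mem_prod [LocallyCompactSpace G] :
    IsClosed {p : G × CFClosed G | p.1 ∈ p.2} := by
  refine isOpen_compl_iff.1 (isOpen_iff_mem_nhds.2 fun ⟨x, P⟩ hx => ?_)
  obtain ⟨K, hKx, hKP, hK⟩ := local_compact_nhds (P.isClosed'.isOpen_compl.mem_nhds hx)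
  refine mem_of_superset (prod_mem_nhds hKx
    ((isOpen_setOf_inter_eq_empty hK).mem_nhds (disjoint_compl_right.mono_right hKP).inter_eq))
    fun ⟨y, Q⟩ ⟨hy, hQ⟩ hyQ => (eq_empty_iff_forall_notMem.1 hQ y) ⟨hyQ, hy⟩

variable [Group G] [IsTopologicalGroup G]

instance : SMul G (CFClosed G) :=
  ⟨fun x P => ⟨x • (P : Set G), P.isClosed'.smul x⟩⟩

theorem isOpen_setOf_smul_inter_eq_empty [LocallyCompactSpace G] {K : Set G} (hK : IsCompact K) :
    IsOpen {p : G × CFClosed G | p.1 • (p.2 : Set G) ∩ K = ∅} := by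
  refine isOpen_iff_mem_nhds.2 fun ⟨x, P⟩ hxP => ?_
  have hKP : x⁻¹ • K ⊆ (P : Set G)ᶜ := by
    rintro _ ⟨k, hk, rfl⟩ hkP
    exact eq_empty_iff_forall_notMem.1 hxP k ⟨⟨x⁻¹ • k, hkP, smul_inv_smul x k⟩, hk⟩
  obtain ⟨V, hV, hVK⟩ := compact_open_separated_mul_left (hK.smul x⁻¹) P.isClosed'.isOpen_compl hKP
  obtain ⟨W, hW, hWV, hWc⟩ := local_compact_nhds hV
  have hx : {y : G | y⁻¹ * x ∈ W} ∈ 𝓝 x :=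
    (continuous_inv.mul continuous_const).continuousAt.preimage_mem_nhds (by simpa using hW)
  have hP : (P : Set G) ∩ (W * x⁻¹ • K) = ∅ :=
    disjoint_iff_inter_eq_empty.1 <| disjoint_compl_right.mono_right <|
      (mul_subset_mul_right hWV).trans hVK
  refine mem_of_superset (prod_mem_nhds hx
    ((isOpen_setOf_inter_eq_empty (hWc.mul (hK.smul x⁻¹))).mem_nhds hP)) ?_
  rintro ⟨y, Q⟩ ⟨hy, hQ⟩
  refine eq_empty_iff_forall_notMem.2 ?_
  rintro _ ⟨⟨q, hq, rfl⟩, hk⟩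
  exact eq_empty_iff_forall_notMem.1 hQ q
    ⟨hq, y⁻¹ * x, hy, x⁻¹ • (y • q), ⟨y • q, hk, rfl⟩, by simp [smul_eq_mul, mul_assoc]⟩

theorem isOpen_setOf_smul_inter_nonempty {U : Set G} (hU : IsOpen U) :
    IsOpen {p : G × CFClosed G | (p.1 • (p.2 : Set G) ∩ U).Nonempty} := by
  refine isOpen_iff_mem_nhds.2 ?_
  rintro ⟨x, P⟩ ⟨_, ⟨p, hp, rfl⟩, hxp⟩
  obtain ⟨V, W, hV, hxV, hW, hpW, hVW⟩ := mem_nhds_prod_iff'.1 <|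
    continuous_mul.continuousAt.preimage_mem_nhds (hU.mem_nhds hxp)
  refine mem_of_superset (prod_mem_nhds (hV.mem_nhds hxV)
    ((isOpen_setOf_inter_nonempty hW).mem_nhds ⟨p, hp, hpW⟩)) ?_
  rintro ⟨y, Q⟩ ⟨hy, q, hq, hqW⟩
  exact ⟨y • q, ⟨q, hq, rfl⟩, hVW (mk_mem_prod hy hqW)⟩

instance [LocallyCompactSpace G] : ContinuousSMul G (CFClosed G) := by
  refine ⟨continuous_generateFrom_iff.2 ?_⟩
  rintro s (⟨K, hK, rfl⟩ | ⟨U, hU, rfl⟩)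
  exacts [isOpen_setOf_smul_inter_eq_empty hK, isOpen_setOf_smul_inter_nonempty hU]

end CFClosed

theorem isClosed_discreteHull {G : Type*} [TopologicalSpace G] [Group G] (Λ : CFClosed G) :
    IsClosed (discreteHull Λ) :=
  isClosed_closure.inter (CFClosed.isClosed_setOf_mem 1)

open Pointwise in
theorem isCompact_groupoid_fiber_general (G : Type*) [TopologicalSpace G] [Group G]
    [IsTopologicalGroup G] [LocallyCompactSpace G]
    (Λ : CFClosed G) (C : Set G) (hC : IsCompact C) :
    IsCompact {p : G × CFClosed G | p.1 ∈ C ∧ p.2 ∈ discreteHull Λ ∧ p.1⁻¹ ∈ p.2 ∧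
      (⟨p.1 • (p.2 : Set G), p.2.isClosed'.smul p.1⟩ : CFClosed G) ∈ discreteHull Λ} := by
  have hfst : IsCompact (Prod.fst ⁻¹' C : Set (G × CFClosed G)) :=
    prod_univ ▸ hC.prod isCompact_univ
  have hinv : IsClosed {p : G × CFClosed G | p.1⁻¹ ∈ p.2} :=
    CFClosed.isClosed_setOf_mem_prod.preimage (continuous_fst.inv.prodMk continuous_snd)
  exact hfst.inter_right <| ((isClosed_discreteHull Λ).preimage continuous_snd).inter <|
    hinv.inter <| (isClosed_discreteHull Λ).preimage continuous_smul

open Pointwise in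
/-- For a compact `C ⊆ G`, the part of the groupoid `𝒢(Λ)` with first coordinate in `C`
is compact in `G × 𝒞(G)`. -/
theorem isCompact_groupoid_fiber (G : Type*) [TopologicalSpace G] [Group G]
    [IsTopologicalGroup G] [LocallyCompactSpace G] [SecondCountableTopology G] [T2Space G]
    (Λ : CFClosed G) (C : Set G) (hC : IsCompact C) :
    IsCompact {p : G × CFClosed G | p.1 ∈ C ∧ p.2 ∈ discreteHull Λ ∧ p.1⁻¹ ∈ p.2 ∧
      (⟨p.1 • (p.2 : Set G), p.2.isClosed'.smul p.1⟩ : CFClosed G) ∈ discreteHull Λ} :=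
  isCompact_groupoid_fiber_general G Λ C hC
end
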